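/- arXiv:1807.05419 — 2 statements merged into one kernel-verified Lean document; each statement's English description precedes it below -/
import Mathlib

section
/- In the Schelling model on a finite simple graph, if the coloring y is obtained from the coloring x by flipping the color of a single vertex i (y_i = −x_i and y_j = x_j for j ≠ i), then L(y) − L(x) = 2·(u_i(y) − u_i(x)). In particular, L is (up to the factor 2) an exact potential for single-vertex color changes. -/
open Classical Filter Finset

noncomputable section

namespace Schelling

variable {V : Type*} [Fintype V] [DecidableEq V]

/-- A coloring assigns `+1` or `-1` to each vertex. -/
def IsColoring (x : V → ℤ) : Prop := ∀ v, x v = 1 ∨ x v = -1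

/-- `wdeg G x i` : number of neighbors of `i` with the same color minus
the number of neighbors with the opposite color. -/
def wdeg (G : SimpleGraph V) (x : V → ℤ) (i : V) : ℤ :=
  ((univ.filter fun j => G.Adj i j ∧ x j = x i).card : ℤ)
    - ((univ.filter fun j => G.Adj i j ∧ x j ≠ x i).card : ℤ)

/-- Utility of agent `i`. -/
def util (G : SimpleGraph V) (r : ℝ) (εc : V → ℝ) (x : V → ℤ) (i : V) : ℝ :=
  r * (wdeg G x i : ℝ) + εc i

/-- The potential `L`. -/
def potential (G : SimpleGraph V) (r : ℝ) (εc : V → ℝ) (x : V → ℤ) : ℝ :=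
  ∑ i, util G r εc x i

/-- Number of bichromatic edges. -/
def bichromCount (G : SimpleGraph V) (x : V → ℤ) : ℕ :=
  (G.edgeFinset.filter fun e =>
    Sym2.lift ⟨fun u v => x u ≠ x v, fun u v => by simp [ne_comm]⟩ e).card

/-- Number of monochromatic edges. -/
def monoCount (G : SimpleGraph V) (x : V → ℤ) : ℕ :=
  (G.edgeFinset.filter fun e =>
    Sym2.lift ⟨fun u v => x u = x v, fun u v => by simp [eq_comm]⟩ e).card

/-- Number of vertices colored `+1`. -/
def plusCount (x : V → ℤ) : ℕ := (univ.filter fun v => x v = 1).card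

/-- A coloring is maximally segregated if it minimizes the number of bichromatic
edges among all colorings with the same number of `+1` vertices. -/
def MaximallySegregated (G : SimpleGraph V) (x : V → ℤ) : Prop :=
  ∀ x' : V → ℤ, IsColoring x' → plusCount x' = plusCount x →
    bichromCount G x ≤ bichromCount G x'

/-- Exchange the values of a coloring at `i` and `j`. -/
def swap (x : V → ℤ) (i j : V) : V → ℤ :=
  fun v => if v = i then x j else if v = j then x i else x v

/-- The resistance of activating pair `e' = (i,j)` in state `x` with outcome `x'`. -/
def resist (G : SimpleGraph V) (r : ℝ) (εc : V → ℝ)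
    (x : V → ℤ) (e' : V × V) (x' : V → ℤ) : ℝ :=
  let y := swap x e'.1 e'.2
  let a := util G r εc x e'.1 + util G r εc x e'.2
  let b := util G r εc y e'.1 + util G r εc y e'.2
  if x' = x then max 0 (b - a) else max 0 (a - b)

/-- The `N × N` torus. -/
def torus (N : ℕ) : SimpleGraph (ZMod N × ZMod N) where
  Adj u v := u ≠ v ∧
    ((u.1 = v.1 ∧ (u.2 = v.2 + 1 ∨ v.2 = u.2 + 1)) ∨
     (u.2 = v.2 ∧ (u.1 = v.1 + 1 ∨ v.1 = u.1 + 1)))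
  symm := by
    constructor
    rintro u v ⟨hne, h⟩
    refine ⟨hne.symm, ?_⟩
    rcases h with ⟨h1, h2⟩ | ⟨h1, h2⟩
    · exact Or.inl ⟨h1.symm, h2.symm⟩
    · exact Or.inr ⟨h1.symm, h2.symm⟩
  loopless := ⟨fun v h => h.1 rfl⟩

/-- Markovian contagion scheduler. -/
def IsScheduler {W : Type*} [Fintype W] (D : (W × W) → (W × W) → ℝ) : Prop :=
  (∀ e e', 0 ≤ D e e') ∧ (∀ e, ∑ e', D e e' = 1) ∧ (∀ e, 0 < D e e) ∧
  (∀ e e', 0 < D e e' ↔ 0 < D e' e) ∧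
  (∀ e e', Relation.ReflTransGen (fun a b => 0 < D a b) e e')

/-- One step transition probability of the chain `M_β`. -/
def kernel (G : SimpleGraph V) (r : ℝ) (εc : V → ℝ)
    (D : (V × V) → (V × V) → ℝ) (β : ℝ) :
    ((V → ℤ) × (V × V)) → ((V → ℤ) × (V × V)) → ℝ :=
  fun s t =>
    let x := s.1; let x' := t.1; let e' := t.2
    let y := swap x e'.1 e'.2
    let a := util G r εc x e'.1 + util G r εc x e'.2
    let b := util G r εc y e'.1 + util G r εc y e'.2
    D s.2 e' *
      ((if x' = y then Real.exp (β * b) / (Real.exp (β * a) + Real.exp (β * b)) else 0)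
       + (if x' = x then Real.exp (β * a) / (Real.exp (β * a) + Real.exp (β * b)) else 0))

/-- The finite set of all ±1 colorings of `V`. -/
def colorings (V : Type*) [Fintype V] [DecidableEq V] : Finset (V → ℤ) :=
  Fintype.piFinset fun _ => ({1, -1} : Finset ℤ)

/-- The set `Ω_k` of states whose coloring has exactly `k` vertices colored `+1`. -/
def Omega (V : Type*) [Fintype V] [DecidableEq V] (k : ℕ) :
    Finset ((V → ℤ) × (V × V)) :=
  ((colorings V).filter fun x => plusCount x = k) ×ˢ (univ : Finset (V × V))

/-- `n`-step transition probabilities of a kernel restricted to a finite set `S` of states. -/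
def kerpow {S : Type*} [DecidableEq S] (K : S → S → ℝ) (A : Finset S) : ℕ → S → S → ℝ
  | 0 => fun s t => if s = t then 1 else 0
  | n + 1 => fun s t => ∑ u ∈ A, kerpow K A n s u * K u t

/-- An admissible transition of the segregation chain. -/
def Adm (D : (V × V) → (V × V) → ℝ)
    (s t : (V → ℤ) × (V × V)) : Prop :=
  0 < D s.2 t.2 ∧ (t.1 = s.1 ∨ t.1 = swap s.1 t.2.1 t.2.2)

/-- Resistance of a transition between states of the chain. -/
def tres (G : SimpleGraph V) (r : ℝ) (εc : V → ℝ)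
    (s t : (V → ℤ) × (V × V)) : ℝ :=
  resist G r εc s.1 t.2 t.1

/-- `pathOK T a z l` : `l` is the list of successive vertices of a directed path
from `a` to `z` using transitions from `T`. -/
def pathOK {S : Type*} (T : Set (S × S)) (a z : S) : List S → Prop
  | [] => a = z
  | b :: l => (a, b) ∈ T ∧ pathOK T b z l

/-- `T` is a tree (within the state set `A`) rooted at `z`. -/
def IsTreeRootedAt {S : Type*} (Adm : S → S → Prop) (A : Finset S)
    (T : Finset (S × S)) (z : S) : Prop :=
  (∀ p ∈ T, p.1 ∈ A ∧ p.2 ∈ A ∧ Adm p.1 p.2) ∧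
  (∀ w ∈ A, w ≠ z → ∃! l : List S, pathOK (↑T : Set (S × S)) w z l)

/-- Resistance of a set of transitions. -/
def treeRes {S : Type*} (ρ : S → S → ℝ) (T : Finset (S × S)) : ℝ :=
  ∑ p ∈ T, ρ p.1 p.2

end Schelling

/-!
Write `wdeg x v = ∑ j, agreement x v j`, where `agreement x v j` is `±1` on edges and `0`
elsewhere. This pairwise term is symmetric and vanishes on the diagonal, and changing the color of
`i` alone changes it only in row `i` and column `i`. Summing over all `v` therefore counts the
change of `wdeg · i` twice: once in row `i` and once, by symmetry, in column `i`. The noise terms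
`εc` do not depend on the coloring and cancel.
-/

theorem Fintype.sum_sum_eq_two_nsmul_sum_row_of_symm {ι M : Type*} [Fintype ι] [DecidableEq ι]
    [AddCommMonoid M] (f : ι → ι → M) (i : ι) (hsymm : ∀ v j, f v j = f j v)
    (hdiag : f i i = 0) (hsupp : ∀ v j, v ≠ i → j ≠ i → f v j = 0) :
    ∑ v, ∑ j, f v j = 2 • ∑ j, f i j := by
  have hcol : ∀ v ∈ univ.erase i, ∑ j, f v j = f i v := fun v hv => by
    rw [Fintype.sum_eq_single i fun j hj => hsupp v j (ne_of_mem_erase hv) hj, hsymm]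
  rw [← add_sum_erase univ _ (mem_univ i), Finset.sum_congr rfl hcol, sum_erase univ hdiag,
    two_nsmul]

namespace Schelling

section Agreement

variable {V : Type*}

def agreement (G : SimpleGraph V) (x : V → ℤ) (v j : V) : ℤ :=
  if G.Adj v j then if x j = x v then 1 else -1 else 0

theorem agreement_comm (G : SimpleGraph V) (x : V → ℤ) (v j : V) :
    agreement G x v j = agreement G x j v := by
  simp only [agreement, G.adj_comm v j, eq_comm (a := x j)]

theorem agreement_self (G : SimpleGraph V) (x : V → ℤ) (v : V) : agreement G x v v = 0 := by
  simp [agreement]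

theorem agreement_congr (G : SimpleGraph V) {x y : V → ℤ} {v j : V}
    (hv : y v = x v) (hj : y j = x j) : agreement G y v j = agreement G x v j := by
  simp only [agreement, hv, hj]

end Agreement

variable {V : Type*} [Fintype V]

theorem wdeg_eq_sum_agreement (G : SimpleGraph V) (x : V → ℤ) (v : V) :
    wdeg G x v = ∑ j, agreement G x v j := by
  have hsplit : ∀ j, agreement G x v j
      = (if G.Adj v j ∧ x j = x v then 1 else 0) - (if G.Adj v j ∧ x j ≠ x v then 1 else 0) := by
    intro j
    by_cases hadj : G.Adj v j <;> by_cases hx : x j = x v <;> simp [agreement, hadj, hx]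
  simp only [hsplit, sum_sub_distrib, ← sum_filter, sum_const, nsmul_eq_mul, mul_one, wdeg]

theorem sum_wdeg_sub_sum_wdeg_of_eq_off (G : SimpleGraph V) {x y : V → ℤ} {i : V}
    (hyx : ∀ j, j ≠ i → y j = x j) :
    ∑ v, wdeg G y v - ∑ v, wdeg G x v = 2 * (wdeg G y i - wdeg G x i) := by
  simp only [wdeg_eq_sum_agreement, ← sum_sub_distrib]
  rw [two_mul, ← two_nsmul]
  exact Fintype.sum_sum_eq_two_nsmul_sum_row_of_symm _ i
    (fun v j => by rw [agreement_comm G y, agreement_comm G x]) (by simp [agreement_self])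
    (fun v j hv hj => by rw [agreement_congr G (hyx v hv) (hyx j hj), sub_self])

theorem potential_eq (G : SimpleGraph V) (r : ℝ) (εc : V → ℝ) (x : V → ℤ) :
    potential G r εc x = r * ∑ v, (wdeg G x v : ℝ) + ∑ v, εc v := by
  simp only [potential, util, sum_add_distrib, mul_sum]

theorem potential_diff_single_flip_general
    {V : Type*} [Fintype V]
    (G : SimpleGraph V) (r : ℝ) (εc : V → ℝ)
    (x y : V → ℤ) (i : V)
    (hyj : ∀ j : V, j ≠ i → y j = x j) :
    potential G r εc y - potential G r εc x = 2 * (util G r εc y i - util G r εc x i) := by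
  have hwdeg : ∑ v, (wdeg G y v : ℝ) - ∑ v, (wdeg G x v : ℝ)
      = 2 * ((wdeg G y i : ℝ) - wdeg G x i) := by
    exact_mod_cast sum_wdeg_sub_sum_wdeg_of_eq_off G hyj
  rw [potential_eq, potential_eq, util, util]
  linear_combination r * hwdeg

/-- If the coloring `y` is obtained from `x` by flipping the color of a
single vertex `i`, then `L(y) − L(x) = 2·(u_i(y) − u_i(x))` : `L` is (up to the factor 2)
an exact potential for single-vertex color changes. -/
theorem potential_diff_single_flip
    {V : Type*} [Fintype V] [DecidableEq V]
    (G : SimpleGraph V) (r : ℝ) (hr : 0 < r) (εc : V → ℝ)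
    (x y : V → ℤ) (hx : IsColoring x) (i : V)
    (hyi : y i = - x i) (hyj : ∀ j : V, j ≠ i → y j = x j) :
    potential G r εc y - potential G r εc x = 2 * (util G r εc y i - util G r εc x i) :=
  potential_diff_single_flip_general G r εc x y i hyj

end Schelling
end
end

section
/- For every β > 0 and every 0 ≤ k ≤ N², the Markov chain M_β of Schelling's segregation model with Markovian contagion, restricted to the set Ω_k of states (x,e) in which the coloring x has exactly k vertices colored +1, is irreducible and aperiodic: any state in Ω_k can reach any other state in Ω_k with positive probability in finitely many steps, and every state has a positive-probability self-loop at some power of the chain making the period 1. -/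
/-!
Positivity of the transition kernel does not depend on the utilities: whenever `D e e' > 0`,
both outcomes of activating `e'` (keeping the coloring or swapping the two colors) have
positive probability. Since `D e e > 0`, every state carries a self-loop, which gives
aperiodicity. For irreducibility, two colorings with the same number of `+1` vertices differ
by a permutation of the vertices, hence by a product of transpositions; the transposition of
`i` and `j` is realised by walking in the connected scheduler graph to the pair `(i, j)`
without changing the coloring, and then accepting the swap.
-/

open Classical Filter Finset

noncomputable section

namespace Schelling

variable {V : Type*} [Fintype V] [DecidableEq V]

section KernelPowers

variable {S : Type*} [DecidableEq S] {K : S → S → ℝ} {A : Finset S}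

abbrev PosStep (K : S → S → ℝ) (A : Finset S) (a b : S) : Prop := a ∈ A ∧ 0 < K a b

lemma kerpow_nonneg (hK : ∀ s t, 0 ≤ K s t) : ∀ n s t, 0 ≤ kerpow K A n s t
  | 0, s, t => by unfold kerpow; split_ifs <;> norm_num
  | n + 1, s, t => Finset.sum_nonneg fun u _ => mul_nonneg (kerpow_nonneg hK n s u) (hK u t)

lemma kerpow_succ_pos (hK : ∀ s t, 0 ≤ K s t) {n : ℕ} {s u t : S}
    (hsu : 0 < kerpow K A n s u) (hu : u ∈ A) (hut : 0 < K u t) :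
    0 < kerpow K A (n + 1) s t :=
  Finset.sum_pos' (fun w _ => mul_nonneg (kerpow_nonneg hK n s w) (hK w t))
    ⟨u, hu, mul_pos hsu hut⟩

lemma exists_kerpow_pos_of_reflTransGen (hK : ∀ s t, 0 ≤ K s t) {s t : S}
    (h : Relation.ReflTransGen (PosStep K A) s t) : ∃ n, 0 < kerpow K A n s t := by
  induction h with
  | refl => exact ⟨0, by simp [kerpow]⟩
  | tail _ hbc ih =>
    obtain ⟨n, hn⟩ := ih
    exact ⟨n + 1, kerpow_succ_pos hK hn hbc.1 hbc.2⟩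

lemma kerpow_self_pos (hK : ∀ s t, 0 ≤ K s t) {s : S} (hs : s ∈ A) (hss : 0 < K s s) :
    ∀ n, 0 < kerpow K A n s s
  | 0 => by simp [kerpow]
  | n + 1 => kerpow_succ_pos hK (kerpow_self_pos hK hs hss n) hs hss

end KernelPowers

section Colorings

lemma exists_perm_comp_eq_of_card_fiber_eq {α β : Type*} [Fintype α] [DecidableEq β]
    {f g : α → β}
    (h : ∀ c, Fintype.card {a // f a = c} = Fintype.card {a // g a = c}) :
    ∃ σ : Equiv.Perm α, g ∘ σ = f :=
  ⟨.ofFiberEquiv fun c => Fintype.equivOfCardEq (h c), funext (Equiv.ofFiberEquiv_map _)⟩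

lemma mem_colorings_iff {x : V → ℤ} : x ∈ colorings V ↔ IsColoring x := by
  simp [colorings, IsColoring, Fintype.mem_piFinset]

lemma mem_Omega_iff {k : ℕ} {s : (V → ℤ) × (V × V)} :
    s ∈ Omega V k ↔ IsColoring s.1 ∧ plusCount s.1 = k := by
  simp [Omega, mem_colorings_iff]

omit [Fintype V] [DecidableEq V] in
lemma IsColoring.comp_perm {x : V → ℤ} (hx : IsColoring x) (σ : Equiv.Perm V) :
    IsColoring (x ∘ σ) :=
  fun v => hx (σ v)

omit [DecidableEq V] in
lemma plusCount_comp_perm (x : V → ℤ) (σ : Equiv.Perm V) : plusCount (x ∘ σ) = plusCount x :=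
  Finset.card_equiv σ fun v => by simp

omit [Fintype V] in
lemma swap_eq_comp (x : V → ℤ) (i j : V) : swap x i j = x ∘ Equiv.swap i j := by
  funext v
  simp only [swap, Function.comp_apply, Equiv.swap_apply_def]
  split_ifs <;> simp_all

omit [DecidableEq V] in
lemma card_fiber_eq_of_plusCount_eq {x x' : V → ℤ} (hx : IsColoring x) (hx' : IsColoring x')
    (h : plusCount x = plusCount x') (c : ℤ) :
    Fintype.card {v // x v = c} = Fintype.card {v // x' v = c} := by
  have plus : ∀ y : V → ℤ, Fintype.card {v // y v = 1} = plusCount y :=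
    fun y => Fintype.card_subtype _
  by_cases h1 : c = 1
  · rw [h1, plus, plus, h]
  have other : ∀ y : V → ℤ, IsColoring y →
      Fintype.card {v // y v = c} = if c = -1 then Fintype.card V - plusCount y else 0 := by
    intro y hy
    split_ifs with h2
    · rw [← plus, ← Fintype.card_subtype_compl]
      exact Fintype.card_congr (Equiv.subtypeEquivRight fun v => by
        rcases hy v with hv | hv <;> simp [hv, h2])
    · exact Fintype.card_eq_zero_iff.2 ⟨fun ⟨v, hv⟩ => by rcases hy v with h' | h' <;> simp_all⟩
  rw [other x hx, other x' hx', h]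

omit [DecidableEq V] in
lemma exists_perm_of_plusCount_eq {x x' : V → ℤ} (hx : IsColoring x) (hx' : IsColoring x')
    (h : plusCount x = plusCount x') : ∃ σ : Equiv.Perm V, x ∘ σ = x' :=
  exists_perm_comp_eq_of_card_fiber_eq fun c => (card_fiber_eq_of_plusCount_eq hx hx' h c).symm

end Colorings

section Chain

variable {G : SimpleGraph V} {r : ℝ} {εc : V → ℝ} {D : (V × V) → (V × V) → ℝ} {β : ℝ}

lemma kernel_nonneg (hD : ∀ e e', 0 ≤ D e e') (s t : (V → ℤ) × (V × V)) :
    0 ≤ kernel G r εc D β s t :=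
  mul_nonneg (hD _ _) (add_nonneg (by split_ifs <;> positivity) (by split_ifs <;> positivity))

lemma kernel_pos_keep (s : (V → ℤ) × (V × V)) {e : V × V} (he : 0 < D s.2 e) :
    0 < kernel G r εc D β s (s.1, e) := by
  refine mul_pos he (add_pos_of_nonneg_of_pos (by split_ifs <;> positivity) ?_)
  rw [if_pos rfl]
  positivity

lemma kernel_pos_swap (s : (V → ℤ) × (V × V)) {e : V × V} (he : 0 < D s.2 e) :
    0 < kernel G r εc D β s (swap s.1 e.1 e.2, e) := by
  refine mul_pos he (add_pos_of_pos_of_nonneg ?_ (by split_ifs <;> positivity))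
  rw [if_pos rfl]
  positivity

variable {k : ℕ}

lemma reflTransGen_change_pair (hD : IsScheduler D) {x : V → ℤ} (hx : IsColoring x)
    (hk : plusCount x = k) (e e' : V × V) :
    Relation.ReflTransGen (PosStep (kernel G r εc D β) (Omega V k)) (x, e) (x, e') := by
  induction hD.2.2.2.2 e e' with
  | refl => exact .refl
  | @tail b c _ hbc ih => exact ih.tail ⟨mem_Omega_iff.2 ⟨hx, hk⟩, kernel_pos_keep (x, b) hbc⟩

lemma reflTransGen_comp_perm (hD : IsScheduler D) {x : V → ℤ} (hx : IsColoring x)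
    (hk : plusCount x = k) (σ : Equiv.Perm V) (e e' : V × V) :
    Relation.ReflTransGen (PosStep (kernel G r εc D β) (Omega V k)) (x, e) (x ∘ σ, e') := by
  have mem : ∀ g : Equiv.Perm V, IsColoring (x ∘ g) ∧ plusCount (x ∘ g) = k :=
    fun g => ⟨hx.comp_perm g, (plusCount_comp_perm x g).trans hk⟩
  induction σ using Equiv.Perm.swap_induction_on' generalizing e' with
  | one => exact reflTransGen_change_pair hD hx hk e e'
  | mul_swap f i j _ ih =>
    have hswap : swap (x ∘ f) i j = x ∘ ⇑(f * Equiv.swap i j) := by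
      rw [swap_eq_comp]
      rfl
    have step := kernel_pos_swap (G := G) (r := r) (εc := εc) (β := β) (x ∘ f, (i, j))
      (hD.2.2.1 (i, j))
    rw [hswap] at step
    exact ((ih (i, j)).tail ⟨mem_Omega_iff.2 (mem f), step⟩).trans
      (reflTransGen_change_pair hD (mem _).1 (mem _).2 _ e')

lemma reflTransGen_of_mem_Omega (hD : IsScheduler D) {s t : (V → ℤ) × (V × V)}
    (hs : s ∈ Omega V k) (ht : t ∈ Omega V k) :
    Relation.ReflTransGen (PosStep (kernel G r εc D β) (Omega V k)) s t := by
  obtain ⟨hs1, hsk⟩ := mem_Omega_iff.1 hs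
  obtain ⟨ht1, htk⟩ := mem_Omega_iff.1 ht
  obtain ⟨σ, hσ⟩ := exists_perm_of_plusCount_eq hs1 ht1 (hsk.trans htk.symm)
  have h := reflTransGen_comp_perm (G := G) (r := r) (εc := εc) (β := β) hD hs1 hsk σ s.2 t.2
  rwa [hσ] at h

end Chain

theorem restricted_chain_irreducible_aperiodic_general
    (N : ℕ) [NeZero N] (r : ℝ)
    (εc : ZMod N × ZMod N → ℝ)
    (D : ((ZMod N × ZMod N) × (ZMod N × ZMod N)) →
         ((ZMod N × ZMod N) × (ZMod N × ZMod N)) → ℝ)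
    (hD : IsScheduler D)
    (β : ℝ) (k : ℕ) :
    (∀ s ∈ Omega (ZMod N × ZMod N) k, ∀ t ∈ Omega (ZMod N × ZMod N) k,
      ∃ n : ℕ, 0 < n ∧
        0 < kerpow (kernel (torus N) r εc D β) (Omega (ZMod N × ZMod N) k) n s t) ∧
    (∀ s ∈ Omega (ZMod N × ZMod N) k,
      ∃ m : ℕ, ∀ n ≥ m,
        0 < kerpow (kernel (torus N) r εc D β) (Omega (ZMod N × ZMod N) k) n s s) := by
  have hK := kernel_nonneg (G := torus N) (r := r) (εc := εc) (β := β) hD.1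
  have loop : ∀ s, 0 < kernel (torus N) r εc D β s s := fun s => kernel_pos_keep s (hD.2.2.1 s.2)
  refine ⟨fun s hs t ht => ?_, fun s hs => ⟨0, fun n _ => kerpow_self_pos hK hs (loop s) n⟩⟩
  obtain ⟨n, hn⟩ := exists_kerpow_pos_of_reflTransGen hK (reflTransGen_of_mem_Omega hD hs ht)
  exact ⟨n + 1, n.succ_pos, kerpow_succ_pos hK hn ht (loop t)⟩

/-- For every `β > 0` and `0 ≤ k ≤ N²`, the chain `M_β` restricted to
`Ω_k` is irreducible (any state of `Ω_k` reaches any other with positive probability in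
finitely many steps) and aperiodic (for every state, all sufficiently large powers of the
chain have a positive-probability return, i.e. the period is 1). -/
theorem restricted_chain_irreducible_aperiodic
    (N : ℕ) [NeZero N] (hN : 2 ≤ N) (r : ℝ) (hr : 0 < r)
    (εc : ZMod N × ZMod N → ℝ)
    (D : ((ZMod N × ZMod N) × (ZMod N × ZMod N)) →
         ((ZMod N × ZMod N) × (ZMod N × ZMod N)) → ℝ)
    (hD : IsScheduler D)
    (β : ℝ) (hβ : 0 < β) (k : ℕ) (hk : k ≤ N ^ 2) :
    (∀ s ∈ Omega (ZMod N × ZMod N) k, ∀ t ∈ Omega (ZMod N × ZMod N) k,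
      ∃ n : ℕ, 0 < n ∧
        0 < kerpow (kernel (torus N) r εc D β) (Omega (ZMod N × ZMod N) k) n s t) ∧
    (∀ s ∈ Omega (ZMod N × ZMod N) k,
      ∃ m : ℕ, ∀ n ≥ m,
        0 < kerpow (kernel (torus N) r εc D β) (Omega (ZMod N × ZMod N) k) n s s) :=
  restricted_chain_irreducible_aperiodic_general N r εc D hD β k

end Schelling
end
end
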